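/- arXiv:2506.06845 — 3 statements merged into one kernel-verified Lean document; each statement's English description precedes it below -/
import Mathlib

section
/- Let A and B be p × p real matrices, let μ_1, …, μ_K ∈ ℝ^p, and let π_1, …, π_K > 0. Suppose that for all x ∈ ℝ^p and all pairs of classes (k, j), δ_k(x; A) - δ_j(x; A) = δ_k(x; B) - δ_j(x; B). Then (A - B)(μ_k - μ_j) = 0 for all pairs (k, j); and if moreover the vectors { μ_k - μ_1 : k = 2, …, K } span ℝ^p, then A = B. -/
open Matrix

/-- The LDA discriminant function `δ_k(x; A) = xᵀ A μ_k - (1/2) μ_kᵀ A μ_k + log π_k`,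
written for a single class with mean `mu` and prior `prk`. -/
noncomputable def disc {p : ℕ} (A : Matrix (Fin p) (Fin p) ℝ)
    (mu : Fin p → ℝ) (prk : ℝ) (x : Fin p → ℝ) : ℝ :=
  x ⬝ᵥ (A *ᵥ mu) - (1 / 2) * (mu ⬝ᵥ (A *ᵥ mu)) + Real.log prk

/-- Identification: if two precision matrices `A` and `B` induce the same discriminant
differences `δ_k(x) - δ_j(x)` for all `x` and all pairs of classes, then
`(A - B)(μ_k - μ_j) = 0` for all pairs; if moreover the vectors `μ_k - μ_1` span `ℝ^p`,
then `A = B`. -/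
theorem precision_identification {p K : ℕ} (hK : 0 < K)
    (A B : Matrix (Fin p) (Fin p) ℝ)
    (μ : Fin K → Fin p → ℝ) (pr : Fin K → ℝ) (hpr : ∀ k, 0 < pr k)
    (h : ∀ (x : Fin p → ℝ) (k j : Fin K),
      disc A (μ k) (pr k) x - disc A (μ j) (pr j) x =
        disc B (μ k) (pr k) x - disc B (μ j) (pr j) x) :
    (∀ k j : Fin K, (A - B) *ᵥ (μ k - μ j) = 0) ∧
    (Submodule.span ℝ (Set.range fun k : Fin K => μ k - μ ⟨0, hK⟩) = ⊤ → A = B) := by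
  have key : ∀ k j : Fin K, (A - B) *ᵥ (μ k - μ j) = 0 := by
    intro k j
    have hx : ∀ x : Fin p → ℝ, x ⬝ᵥ ((A - B) *ᵥ (μ k - μ j)) = 0 := by
      intro x
      have h1 := h x k j
      have h0 := h 0 k j
      simp only [disc] at h1 h0
      simp only [Matrix.sub_mulVec, Matrix.mulVec_sub, dotProduct_sub, sub_dotProduct]
      nlinarith [h1, h0, zero_dotProduct (A *ᵥ μ k), zero_dotProduct (A *ᵥ μ j),
        zero_dotProduct (B *ᵥ μ k), zero_dotProduct (B *ᵥ μ j)]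
    funext i
    have := hx (Pi.single i 1)
    simpa [dotProduct, Pi.single_apply] using this
  refine ⟨key, fun hspan => ?_⟩
  have hker : ∀ v : Fin p → ℝ, (A - B) *ᵥ v = 0 := by
    intro v
    have hv : v ∈ Submodule.span ℝ (Set.range fun k : Fin K => μ k - μ ⟨0, hK⟩) := by
      rw [hspan]; trivial
    induction hv using Submodule.span_induction with
    | mem x hx =>
      obtain ⟨k, rfl⟩ := hx
      exact key k ⟨0, hK⟩
    | zero => simp [Matrix.mulVec_zero]
    | add x y _ _ hx hy => rw [Matrix.mulVec_add, hx, hy, add_zero]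
    | smul c x _ hx => rw [Matrix.mulVec_smul, hx, smul_zero]
  have : A - B = 0 := by
    ext i j
    have := congrFun (hker (Pi.single j 1)) i
    simpa [Matrix.mulVec_single] using this
  exact sub_eq_zero.mp this
end

section
/- Let S be a p × p real symmetric matrix and σ² > 0, and define f : ℝ^{p×d} → ℝ by f(L) = (1/2) tr(S (L Lᵀ + σ² I_p)) - (1/2) log det(L Lᵀ + σ² I_p). Then f is differentiable at every L ∈ ℝ^{p×d}, and its Fréchet derivative at L in direction H ∈ ℝ^{p×d} is given by Df(L)[H] = tr( Hᵀ ( S L - L (σ² I_d + Lᵀ L)^{-1} ) ); i.e., the gradient of f with respect to L is S L - L (σ² I_d + Lᵀ L)^{-1}. -/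
set_option maxHeartbeats 1000000


open Matrix

attribute [local instance] Matrix.frobeniusNormedAddCommGroup Matrix.frobeniusNormedSpace

/-- The continuous linear functional `H ↦ tr(Hᵀ G)` on `p × d` matrices; `G` is the
gradient of a real-valued function of a matrix in the sense that the Fréchet derivative
in direction `H` is `tr(Hᵀ G)`. -/
noncomputable def gradPairing {p d : ℕ} (G : Matrix (Fin p) (Fin d) ℝ) :
    Matrix (Fin p) (Fin d) ℝ →L[ℝ] ℝ :=
  LinearMap.toContinuousLinearMap
    { toFun := fun H => (Hᵀ * G).trace
      map_add' := by
        intro H₁ H₂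
        simp [Matrix.transpose_add, Matrix.add_mul]
      map_smul' := by
        intro c H
        simp [Matrix.transpose_smul, Matrix.smul_mul] }

variable {p : ℕ}

/-- det as a continuous multilinear map in the rows. -/
noncomputable def detCMM (p : ℕ) :
    ContinuousMultilinearMap ℝ (fun _ : Fin p => (Fin p → ℝ)) ℝ :=
  MultilinearMap.mkContinuous
    (Matrix.detRowAlternating : ((Fin p → ℝ) [⋀^Fin p]→ₗ[ℝ] ℝ)).toMultilinearMap
    (Nat.factorial p) (by
      intro m
      show ‖Matrix.det (Matrix.of m)‖ ≤ _
      rw [Matrix.det_apply]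
      refine (norm_sum_le _ _).trans ?_
      have hbound : ∀ σ : Equiv.Perm (Fin p),
          ‖Equiv.Perm.sign σ • ∏ i, Matrix.of m (σ i) i‖ ≤ ∏ i : Fin p, ‖m i‖ := by
        intro σ
        rw [norm_units_zsmul]
        calc ‖∏ i, Matrix.of m (σ i) i‖ ≤ ∏ i : Fin p, ‖Matrix.of m (σ i) i‖ := by
              simp [Real.norm_eq_abs, Finset.abs_prod]
          _ ≤ ∏ i : Fin p, ‖m (σ i)‖ := by
              refine Finset.prod_le_prod (fun i _ => norm_nonneg _) fun i _ => ?_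
              exact norm_le_pi_norm (m (σ i)) i
          _ = ∏ i : Fin p, ‖m i‖ := Equiv.prod_comp σ fun i => ‖m i‖
      calc ∑ σ : Equiv.Perm (Fin p), ‖Equiv.Perm.sign σ • ∏ i, Matrix.of m (σ i) i‖
          ≤ ∑ _σ : Equiv.Perm (Fin p), ∏ i : Fin p, ‖m i‖ :=
            Finset.sum_le_sum fun σ _ => hbound σ
        _ = (Nat.factorial p : ℝ) * ∏ i : Fin p, ‖m i‖ := by
            rw [Finset.sum_const, Finset.card_univ, Fintype.card_perm, nsmul_eq_mul]
            simp)

example : True := trivial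

/-- linear functional H ↦ tr(G * H) on square matrices -/
noncomputable def tracePairing (p : ℕ) (G : Matrix (Fin p) (Fin p) ℝ) :
    Matrix (Fin p) (Fin p) ℝ →L[ℝ] ℝ :=
  LinearMap.toContinuousLinearMap
    { toFun := fun H => (G * H).trace
      map_add' := by intro H₁ H₂; simp [Matrix.mul_add]
      map_smul' := by intro c H; simp [Matrix.mul_smul] }

@[simp] lemma tracePairing_apply (G H : Matrix (Fin p) (Fin p) ℝ) :
    tracePairing p G H = (G * H).trace := rfl

noncomputable def matToPi (p : ℕ) : Matrix (Fin p) (Fin p) ℝ →L[ℝ] (Fin p → Fin p → ℝ) :=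
  LinearMap.toContinuousLinearMap
    { toFun := fun A => A
      map_add' := fun _ _ => rfl
      map_smul' := fun _ _ => rfl }

theorem key_sum (A H : Matrix (Fin p) (Fin p) ℝ) :
    ∑ i, (A.updateRow i (H i)).det = (Matrix.adjugate A * H).trace := by
  have h1 : ∀ i, (A.updateRow i (H i)).det = Matrix.cramer Aᵀ (H i) i := fun i =>
    (Matrix.cramer_transpose_apply A (H i) i).symm
  simp only [h1]
  have h2 : ∀ i : Fin p, (H i) = ∑ j, (H i j) • (Pi.single j 1 : Fin p → ℝ) := by
    intro i
    funext k
    simp [Finset.sum_apply, Pi.single_apply]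
  calc ∑ i, Matrix.cramer Aᵀ (H i) i
      = ∑ i, ∑ j, H i j * Matrix.cramer Aᵀ (Pi.single j 1) i := by
        refine Finset.sum_congr rfl fun i _ => ?_
        conv_lhs => rw [h2 i]
        rw [map_sum]
        simp only [Finset.sum_apply, _root_.map_smul, Pi.smul_apply, smul_eq_mul]
    _ = (Matrix.adjugate A * H).trace := by
        rw [Matrix.trace, Finset.sum_comm]
        refine Finset.sum_congr rfl fun i _ => ?_
        simp only [Matrix.diag_apply, Matrix.mul_apply]
        refine Finset.sum_congr rfl fun j _ => ?_
        rw [Matrix.adjugate_apply, ← Matrix.cramer_transpose_apply, mul_comm]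

theorem hasFDerivAt_det (A : Matrix (Fin p) (Fin p) ℝ) :
    HasFDerivAt Matrix.det (tracePairing p (Matrix.adjugate A)) A := by
  have h1 := (detCMM p).hasFDerivAt (x := matToPi p A)
  have h2 := (matToPi p).hasFDerivAt (x := A)
  have h3 := h1.comp A h2
  have hfun : (fun B : Matrix (Fin p) (Fin p) ℝ => detCMM p (matToPi p B)) = Matrix.det := rfl
  rw [show (⇑(detCMM p) ∘ ⇑(matToPi p)) = Matrix.det from rfl] at h3
  refine h3.congr_fderiv (ContinuousLinearMap.ext fun H => ?_)
  show (detCMM p).linearDeriv (matToPi p A) (matToPi p H) = _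
  rw [ContinuousMultilinearMap.linearDeriv_apply]
  have : ∀ i, detCMM p (Function.update (matToPi p A) i (matToPi p H i))
      = (A.updateRow i (H i)).det := fun i => rfl
  simp only [this]
  rw [key_sum]
  rfl

@[simp] lemma gradPairing_apply {p d : ℕ} (G H : Matrix (Fin p) (Fin d) ℝ) :
    gradPairing G H = (Hᵀ * G).trace := rfl

lemma isBoundedBilinearMap_matMul {p d q : ℕ} :
    IsBoundedBilinearMap ℝ (fun x : Matrix (Fin p) (Fin d) ℝ × Matrix (Fin d) (Fin q) ℝ =>
      x.1 * x.2) where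
  add_left := fun x₁ x₂ y => Matrix.add_mul x₁ x₂ y
  smul_left := fun c x y => Matrix.smul_mul c x y
  add_right := fun x y₁ y₂ => Matrix.mul_add x y₁ y₂
  smul_right := fun c x y => Matrix.mul_smul x c y
  bound := ⟨1, one_pos, fun x y => by
    simpa using Matrix.frobenius_norm_mul x y⟩

noncomputable def transposeCLM (p d : ℕ) :
    Matrix (Fin p) (Fin d) ℝ →L[ℝ] Matrix (Fin d) (Fin p) ℝ :=
  LinearMap.toContinuousLinearMap
    { toFun := fun A => Aᵀ
      map_add' := fun _ _ => Matrix.transpose_add _ _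
      map_smul' := fun _ _ => Matrix.transpose_smul _ _ }

/-- The gradient of the factored Gaussian negative log-likelihood
`f(L) = (1/2) tr(S (L Lᵀ + σ² I)) - (1/2) log det(L Lᵀ + σ² I)`
with respect to `L` is `S L - L (σ² I_d + Lᵀ L)⁻¹`: `f` is differentiable at every `L`
with Fréchet derivative `H ↦ tr(Hᵀ (S L - L (σ² I_d + Lᵀ L)⁻¹))`. -/
theorem nll_gradient {p d : ℕ} (S : Matrix (Fin p) (Fin p) ℝ) (hS : S.IsSymm)
    (sq : ℝ) (hsq : 0 < sq) (L : Matrix (Fin p) (Fin d) ℝ) :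
    HasFDerivAt
      (fun L : Matrix (Fin p) (Fin d) ℝ =>
        (1 / 2) * (S * (L * Lᵀ + sq • 1)).trace -
          (1 / 2) * Real.log (L * Lᵀ + sq • (1 : Matrix (Fin p) (Fin p) ℝ)).det)
      (gradPairing (S * L - L * (sq • (1 : Matrix (Fin d) (Fin d) ℝ) + Lᵀ * L)⁻¹)) L := by
  -- notation
  have hsm : ∀ (n : ℕ), (sq • (1 : Matrix (Fin n) (Fin n) ℝ)).PosDef := by
    intro n
    rw [Matrix.smul_one_eq_diagonal]
    exact Matrix.posDef_diagonal_iff.mpr fun _ => hsq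
  have hLLt : (L * Lᵀ).PosSemidef := by
    have := Matrix.posSemidef_self_mul_conjTranspose L
    rwa [Matrix.conjTranspose_eq_transpose_of_trivial] at this
  have hLtL : (Lᵀ * L).PosSemidef := by
    have := Matrix.posSemidef_conjTranspose_mul_self L
    rwa [Matrix.conjTranspose_eq_transpose_of_trivial] at this
  have hMpd : (L * Lᵀ + sq • (1 : Matrix (Fin p) (Fin p) ℝ)).PosDef :=
    Matrix.PosDef.posSemidef_add hLLt (hsm p)
  have hNpd : (sq • (1 : Matrix (Fin d) (Fin d) ℝ) + Lᵀ * L).PosDef :=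
    Matrix.PosDef.add_posSemidef (hsm d) hLtL
  set M : Matrix (Fin p) (Fin p) ℝ := L * Lᵀ + sq • 1 with hMdef
  set N : Matrix (Fin d) (Fin d) ℝ := sq • 1 + Lᵀ * L with hNdef
  have hMu : IsUnit M.det := hMpd.det_pos.ne'.isUnit
  have hNu : IsUnit N.det := hNpd.det_pos.ne'.isUnit
  -- push-through identity
  have hMN : M * L = L * N := by
    rw [hMdef, hNdef, Matrix.add_mul, Matrix.mul_add, Matrix.smul_mul, Matrix.mul_smul,
      Matrix.one_mul, Matrix.mul_one, Matrix.mul_assoc, add_comm]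
  have key : M⁻¹ * L = L * N⁻¹ := by
    calc M⁻¹ * L = M⁻¹ * L * (N * N⁻¹) := by
            rw [Matrix.mul_nonsing_inv N hNu, Matrix.mul_one]
      _ = M⁻¹ * (L * N) * N⁻¹ := by rw [← Matrix.mul_assoc, Matrix.mul_assoc M⁻¹ L N]
      _ = M⁻¹ * (M * L) * N⁻¹ := by rw [hMN]
      _ = L * N⁻¹ := by
          rw [← Matrix.mul_assoc M⁻¹ M L, Matrix.nonsing_inv_mul M hMu, Matrix.one_mul]
  -- symmetry of M⁻¹
  have hMsymm : Mᵀ = M := by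
    rw [hMdef]
    simp [Matrix.transpose_add, Matrix.transpose_mul, Matrix.transpose_smul]
  have hMinvsymm : (M⁻¹)ᵀ = M⁻¹ := by
    rw [Matrix.transpose_nonsing_inv, hMsymm]
  -- derivative of the inner matrix map
  have h1 : HasFDerivAt (fun L : Matrix (Fin p) (Fin d) ℝ => (L, Lᵀ))
      ((ContinuousLinearMap.id ℝ _).prod (transposeCLM p d)) L :=
    (hasFDerivAt_id L).prodMk (transposeCLM p d).hasFDerivAt
  have h2 := (isBoundedBilinearMap_matMul (p := p) (d := d) (q := p)).hasFDerivAt (L, Lᵀ)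
  have h3 := h2.comp L h1
  have h4 := h3.add_const (sq • (1 : Matrix (Fin p) (Fin p) ℝ))
  -- the inner derivative, explicitly
  set D : Matrix (Fin p) (Fin d) ℝ →L[ℝ]  Matrix (Fin p) (Fin p) ℝ :=
    ((isBoundedBilinearMap_matMul (p := p) (d := d) (q := p)).deriv (L, Lᵀ)).comp
      ((ContinuousLinearMap.id ℝ _).prod (transposeCLM p d)) with hDdef
  have hDapp : ∀ H : Matrix (Fin p) (Fin d) ℝ, D H = L * Hᵀ + H * Lᵀ := by
    intro H
    rw [hDdef]
    change (isBoundedBilinearMap_matMul (p := p) (d := d) (q := p)).deriv (L, Lᵀ) (H, Hᵀ) = _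
    rw [IsBoundedBilinearMap.deriv_apply]
  have h4' : HasFDerivAt (fun L : Matrix (Fin p) (Fin d) ℝ => L * Lᵀ + sq • 1) D L := h4
  -- trace part
  have h5 := ((tracePairing p S).hasFDerivAt (x := M)).comp L h4'
  have h5' : HasFDerivAt
      (fun L : Matrix (Fin p) (Fin d) ℝ => (1/2 : ℝ) * (S * (L * Lᵀ + sq • 1)).trace)
      ((1/2 : ℝ) • ((tracePairing p S).comp D)) L := h5.const_mul (1/2)
  -- log det part
  have h6 := (hasFDerivAt_det (p := p) M).comp L h4'
  have h7 := (Real.hasDerivAt_log hMpd.det_pos.ne').comp_hasFDerivAt L h6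
  have h7' : HasFDerivAt
      (fun L : Matrix (Fin p) (Fin d) ℝ =>
        (1/2 : ℝ) * Real.log (L * Lᵀ + sq • (1 : Matrix (Fin p) (Fin p) ℝ)).det)
      ((1/2 : ℝ) • ((M.det)⁻¹ • ((tracePairing p M.adjugate).comp D))) L := h7.const_mul (1/2)
  have hfinal := h5'.sub h7'
  refine hfinal.congr_fderiv (ContinuousLinearMap.ext fun H => ?_)
  -- now the algebra
  have tr_eq : ∀ (P : Matrix (Fin p) (Fin p) ℝ), Pᵀ = P →
      (P * (L * Hᵀ + H * Lᵀ)).trace = 2 * (Hᵀ * (P * L)).trace := by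
    intro P hP
    rw [Matrix.mul_add, Matrix.trace_add]
    have e1 : (P * (L * Hᵀ)).trace = (Hᵀ * (P * L)).trace := by
      rw [← Matrix.mul_assoc, Matrix.trace_mul_comm]
    have e2 : (P * (H * Lᵀ)).trace = (Hᵀ * (P * L)).trace := by
      rw [← Matrix.mul_assoc, Matrix.trace_mul_cycle, ← Matrix.trace_transpose]
      simp [Matrix.transpose_mul, hP, Matrix.mul_assoc]
    rw [e1, e2]; ring
  have hSt : Sᵀ = S := hS
  have hMinv : M⁻¹ = (M.det)⁻¹ • M.adjugate := by
    rw [Matrix.inv_def, Ring.inverse_eq_inv']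
  change (1/2 : ℝ) • (S * D H).trace - (1/2 : ℝ) • ((M.det)⁻¹ • (M.adjugate * D H).trace)
    = (Hᵀ * (S * L - L * N⁻¹)).trace
  rw [hDapp H, tr_eq S hSt]
  have hadj : (M.det)⁻¹ * (M.adjugate * (L * Hᵀ + H * Lᵀ)).trace
      = (M⁻¹ * (L * Hᵀ + H * Lᵀ)).trace := by
    rw [hMinv, Matrix.smul_mul, Matrix.trace_smul, smul_eq_mul]
  simp only [smul_eq_mul]
  rw [hadj, tr_eq M⁻¹ hMinvsymm, key]
  rw [Matrix.mul_sub, Matrix.trace_sub]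
  ring
end

section
/- Let S be a p × p real symmetric positive definite matrix. Then the function A ↦ tr(S A) - log det A over the set of p × p real symmetric positive definite matrices attains its unique global minimum at A = S^{-1}; that is, for every symmetric positive definite A, tr(S A) - log det A ≥ tr(S S^{-1}) - log det(S^{-1}) = p + log det S, with equality if and only if A = S^{-1}. -/
open Matrix

/-- Key lemma: for a positive definite `B`, `tr B - log det B ≥ p`, with equality iff `B = 1`. -/
lemma trace_sub_log_det_key {p : ℕ} (B : Matrix (Fin p) (Fin p) ℝ) (hB : B.PosDef) :
    (p : ℝ) ≤ B.trace - Real.log B.det ∧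
      (B.trace - Real.log B.det = (p : ℝ) ↔ B = 1) := by
  classical
  set μ := hB.1.eigenvalues with hμ
  have hμpos : ∀ i, 0 < μ i := hB.eigenvalues_pos
  set U : Matrix (Fin p) (Fin p) ℝ := (hB.1.eigenvectorUnitary : Matrix (Fin p) (Fin p) ℝ)
  have hspec : B = U * Matrix.diagonal (RCLike.ofReal ∘ μ) * star U := hB.1.spectral_theorem
  have hU1 : star U * U = 1 := Matrix.UnitaryGroup.star_mul_self hB.1.eigenvectorUnitary
  have hU2 : U * star U = 1 := by
    have := mul_eq_one_comm.mp hU1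
    exact this
  have htr : B.trace = ∑ i, μ i := by
    rw [hspec, Matrix.trace_mul_cycle, hU1, Matrix.one_mul, Matrix.trace_diagonal]
    simp
  have hdet : B.det = ∏ i, μ i := by
    simpa using hB.1.det_eq_prod_eigenvalues
  have hlog : Real.log B.det = ∑ i, Real.log (μ i) := by
    rw [hdet, Real.log_prod]
    exact fun i _ => (hμpos i).ne'
  have hterm : ∀ i : Fin p, (1 : ℝ) ≤ μ i - Real.log (μ i) := by
    intro i
    have := Real.log_le_sub_one_of_pos (hμpos i)
    linarith
  have hsum : B.trace - Real.log B.det = ∑ i, (μ i - Real.log (μ i)) := by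
    rw [htr, hlog, ← Finset.sum_sub_distrib]
  constructor
  · rw [hsum]
    calc (p : ℝ) = ∑ _i : Fin p, (1 : ℝ) := by simp
    _ ≤ ∑ i, (μ i - Real.log (μ i)) := Finset.sum_le_sum fun i _ => hterm i
  · constructor
    · intro heq
      have hp : ∑ _i : Fin p, (1 : ℝ) = ∑ i, (μ i - Real.log (μ i)) := by
        rw [← hsum, heq]; simp
      have hall : ∀ i ∈ Finset.univ, (1 : ℝ) = μ i - Real.log (μ i) :=
        (Finset.sum_eq_sum_iff_of_le fun i _ => hterm i).1 hp
      have hμ1 : ∀ i, μ i = 1 := by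
        intro i
        by_contra hne
        have := Real.log_lt_sub_one_of_pos (hμpos i) hne
        have h1 := hall i (Finset.mem_univ i)
        linarith
      have hfun : (RCLike.ofReal ∘ μ : Fin p → ℝ) = fun _ => 1 := funext fun i => by
        simp [hμ1 i]
      have hdiag : Matrix.diagonal (RCLike.ofReal ∘ μ) = (1 : Matrix (Fin p) (Fin p) ℝ) := by
        rw [hfun, Matrix.diagonal_one]
      rw [hspec, hdiag, Matrix.mul_one, hU2]
    · rintro rfl
      simp [Matrix.trace_one]

/-- For a symmetric positive definite `S`, the function `A ↦ tr(S A) - log det A` over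
symmetric positive definite matrices attains its unique global minimum at `A = S⁻¹`,
where it takes the value `tr(S S⁻¹) - log det S⁻¹ = p + log det S`. -/
theorem trace_sub_log_det_min {p : ℕ} (S : Matrix (Fin p) (Fin p) ℝ) (hS : S.PosDef) :
    ((S * S⁻¹).trace - Real.log (S⁻¹).det = (p : ℝ) + Real.log S.det) ∧
    ∀ A : Matrix (Fin p) (Fin p) ℝ, A.PosDef →
      ((p : ℝ) + Real.log S.det ≤ (S * A).trace - Real.log A.det ∧
        ((S * A).trace - Real.log A.det = (p : ℝ) + Real.log S.det ↔ A = S⁻¹)) := by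
  classical
  have hSdet : IsUnit S.det := hS.det_pos.ne'.isUnit
  have hpart1 : (S * S⁻¹).trace - Real.log (S⁻¹).det = (p : ℝ) + Real.log S.det := by
    rw [Matrix.mul_nonsing_inv S hSdet, Matrix.trace_one, Matrix.det_nonsing_inv,
      Ring.inverse_eq_inv, Real.log_inv]
    simp
  refine ⟨hpart1, fun A hA => ?_⟩
  -- square root of S
  set Q := (open scoped MatrixOrder in CFC.sqrt S) with hQdef
  have hQps : Q.PosSemidef := by open scoped MatrixOrder in exact (CFC.sqrt_nonneg S).posSemidef
  have hQher : Qᴴ = Q := hQps.1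
  have hQQ : Q * Q = S := by
    open scoped MatrixOrder in exact CFC.sqrt_mul_sqrt_self S hS.posSemidef.nonneg
  have hQdet : IsUnit Q.det := by
    have h : Q.det * Q.det = S.det := by rw [← Matrix.det_mul, hQQ]
    have : Q.det ≠ 0 := by
      intro h0
      rw [h0, mul_zero] at h
      exact hS.det_pos.ne' h.symm
    exact this.isUnit
  -- the matrix B = Q * A * Q
  set B := Q * A * Q with hBdef
  have hBps : B.PosSemidef := by
    have := hA.posSemidef.mul_mul_conjTranspose_same Q
    rwa [hQher] at this
  have hB : B.PosDef := by
    refine Matrix.posDef_iff_dotProduct_mulVec.mpr ⟨hBps.1, fun x hx => ?_⟩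
    have hQx : Q *ᵥ x ≠ 0 := by
      intro h0
      exact hx ((Matrix.mulVec_injective_iff_isUnit.mpr
        ((Matrix.isUnit_iff_isUnit_det Q).mpr hQdet)).eq_iff.mp (by simpa using h0))
    have hpos := (Matrix.posDef_iff_dotProduct_mulVec.mp hA).2 hQx
    calc (0 : ℝ) < dotProduct (star (Q *ᵥ x)) (A *ᵥ (Q *ᵥ x)) := hpos
    _ = dotProduct (star x) (B *ᵥ x) := by
        rw [hBdef, star_mulVec, hQher, Matrix.mul_assoc, ← Matrix.mulVec_mulVec,
          Matrix.dotProduct_mulVec, ← Matrix.mulVec_mulVec,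
          Matrix.dotProduct_mulVec (star x)]
        rw [Matrix.dotProduct_mulVec, Matrix.dotProduct_mulVec, Matrix.dotProduct_mulVec]
  have htr : (S * A).trace = B.trace := by
    rw [← hQQ, Matrix.mul_assoc, Matrix.trace_mul_comm, ← hBdef]
  have hdetB : B.det = S.det * A.det := by
    rw [hBdef, Matrix.det_mul, Matrix.det_mul, ← hQQ, Matrix.det_mul]
    ring
  have hlogB : Real.log B.det = Real.log S.det + Real.log A.det := by
    rw [hdetB, Real.log_mul hS.det_pos.ne' hA.det_pos.ne']
  have hobj : (S * A).trace - Real.log A.det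
      = (B.trace - Real.log B.det) + Real.log S.det := by
    rw [htr, hlogB]; ring
  obtain ⟨hkey1, hkey2⟩ := trace_sub_log_det_key B hB
  have hBA : B = 1 ↔ A = S⁻¹ := by
    constructor
    · intro h
      have h2 : Q⁻¹ * (Q * A * Q) * Q⁻¹ = Q⁻¹ * 1 * Q⁻¹ := by rw [← hBdef, h]
      have h3 : A = Q⁻¹ * Q⁻¹ := by
        rw [Matrix.mul_one] at h2
        calc A = Q⁻¹ * Q * A * (Q * Q⁻¹) := by
              rw [Matrix.nonsing_inv_mul Q hQdet, Matrix.mul_nonsing_inv Q hQdet,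
                Matrix.one_mul, Matrix.mul_one]
        _ = Q⁻¹ * (Q * A * Q) * Q⁻¹ := by simp only [Matrix.mul_assoc]
        _ = Q⁻¹ * Q⁻¹ := h2
      rw [h3, ← hQQ, Matrix.mul_inv_rev]
    · intro h
      rw [hBdef, h, ← hQQ, Matrix.mul_inv_rev]
      calc Q * (Q⁻¹ * Q⁻¹) * Q = (Q * Q⁻¹) * (Q⁻¹ * Q) := by
            simp only [Matrix.mul_assoc]
      _ = 1 := by
          rw [Matrix.mul_nonsing_inv Q hQdet, Matrix.nonsing_inv_mul Q hQdet,
            Matrix.one_mul]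
  constructor
  · rw [hobj]; linarith
  · rw [hobj, ← hBA, ← hkey2]
    constructor <;> intro h <;> linarith
end
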